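/- The language I = { aᵖcᵠaʳ : p, q, r ≥ 1, and (p > q and p > r) or (p = r and p ≥ q) } over the alphabet {a, c} is not context-free. -/

import Mathlib

/-!
Pumping lemma: walk down a parse tree of a long word, always into the child with the longest
yield. At a step that leaves a nonempty margin next to that child, the yield shrinks by at most
the factor `maxRuleLength + 1`, so a word longer than `(maxRuleLength + 1) ^ k` passes more than
`k` such steps and some nonterminal `B` is met twice among them: `S ⇒* uBz`, `B ⇒* vBy` with
`vy ≠ ε` and `B ⇒* x`.

Pump `0ᴺ1ᴺ0ᴺ` (`a = 0`, `c = 1`). Every word `0ᵖ1ᵠ0ʳ` of the language has `q ≤ p` and `r ≤ p`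
and contains no scattered `101`, so a pumped piece containing a `1` consists of `1`s only.
If `v` contains a `1`, pumping up adds `1`s while keeping `p = N`. Otherwise, if `y` contains a
`1`, the last block keeps `r ≥ N` in both pumped words; pumping down then forces `p ≥ N`, so `v`
is empty, and pumping up gives `p ≤ N < q`. Otherwise only `0`s are pumped, and pumping down
gives `q = N ≥ p` with `p + r < 2N`.
-/

namespace List

variable {α β : Type*}

theorem cons_sublist_of_cons_sublist_replicate_append {a b : α} (hab : a ≠ b) {l m : List α}
    (n : ℕ) (h : a :: l <+ replicate n b ++ m) : a :: l <+ m := by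
  induction n with
  | zero => simpa using h
  | succ n ih =>
    rw [replicate_succ, cons_append, sublist_cons_iff] at h
    obtain h | ⟨r, hr, -⟩ := h
    · exact ih h
    · exact absurd (cons_eq_cons.mp hr).1 hab

theorem forall₂_append_left_iff {R : α → β → Prop} {l₁ l₂ : List α} {m : List β} :
    Forall₂ R (l₁ ++ l₂) m ↔ ∃ m₁ m₂, m = m₁ ++ m₂ ∧ Forall₂ R l₁ m₁ ∧ Forall₂ R l₂ m₂ := by
  constructor
  · induction l₁ generalizing m with
    | nil => exact fun h => ⟨[], m, rfl, .nil, h⟩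
    | cons a l₁ ih =>
      rintro (_ | ⟨hab, h⟩)
      obtain ⟨m₁, m₂, rfl, h₁, h₂⟩ := ih h
      exact ⟨_ :: m₁, m₂, rfl, .cons hab h₁, h₂⟩
  · rintro ⟨m₁, m₂, rfl, h₁, h₂⟩
    exact rel_append h₁ h₂

theorem Forall₂.exists_longest {R : α → List β → Prop} {l : List α} {ws : List (List β)}
    (h : Forall₂ R l ws) (hws : ws ≠ []) :
    ∃ p a q wp x wq, l = p ++ a :: q ∧ ws = wp ++ x :: wq ∧
      Forall₂ R p wp ∧ R a x ∧ Forall₂ R q wq ∧ ws.flatten.length ≤ l.length * x.length := by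
  classical
  obtain ⟨x, hx, hmax⟩ := ws.toFinset.exists_max_image length (by simpa using hws)
  have hlen : ws.flatten.length ≤ l.length * x.length := by
    rw [length_flatten, h.length_eq, ← length_map (f := length), ← smul_eq_mul]
    exact sum_le_card_nsmul _ _ (by simpa using hmax)
  obtain ⟨wp, wq, rfl⟩ := append_of_mem (mem_toFinset.mp hx)
  have hp := forall₂_take_append l wp (x :: wq) h
  obtain ⟨a, q, ha, hq, hl⟩ := forall₂_cons_right_iff.mp (forall₂_drop_append l wp (x :: wq) h)
  refine ⟨_, a, q, wp, x, wq, ?_, rfl, hp, ha, hq, hlen⟩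
  rw [← hl, take_append_drop]

variable [DecidableEq α]

theorem idxOf_append_cons_self (l₁ l₂ : List α) (a : α) :
    (l₁ ++ a :: l₂).idxOf a = l₁.idxOf a := by
  by_cases h : a ∈ l₁
  · exact idxOf_append_of_mem h
  · rw [idxOf_append_of_notMem h, idxOf_cons_self, idxOf_eq_length h, add_zero]

theorem idxOf_reverse_append_append {a : α} {s y z : List α} (ha : a ∈ y)
    (hy : ∀ b ∈ y, b = a) : (s ++ y ++ z).reverse.idxOf a = z.reverse.idxOf a := by
  obtain rfl | ⟨y, b, rfl⟩ := eq_nil_or_concat y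
  · simp at ha
  · obtain rfl := hy b (by simp)
    simpa using idxOf_append_cons_self z.reverse (y.reverse ++ s.reverse) b

theorem idxOf_append_le_idxOf_append_append {a : α} {m : List α} (h : a ∉ m) (s t : List α) :
    (s ++ t).idxOf a ≤ (s ++ m ++ t).idxOf a := by
  by_cases hs : a ∈ s
  · rw [idxOf_append_of_mem hs, append_assoc, idxOf_append_of_mem hs]
  · rw [idxOf_append_of_notMem hs, append_assoc, idxOf_append_of_notMem hs,
      idxOf_append_of_notMem h]
    omega

end List

namespace ContextFreeGrammar

open List

variable {T : Type*} {g : ContextFreeGrammar T}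

/-- `g.Parses n s w`: the symbol `s` has a parse tree of height at most `n` with yield `w`. -/
def Parses (g : ContextFreeGrammar T) : ℕ → Symbol T g.NT → List T → Prop
  | _, .terminal t, w => w = [t]
  | 0, .nonterminal _, _ => False
  | n + 1, .nonterminal A, w =>
      ∃ r ∈ g.rules, r.input = A ∧ ∃ ws, Forall₂ (g.Parses n) r.output ws ∧ w = ws.flatten

@[simp]
theorem parses_terminal {n : ℕ} {t : T} {w : List T} :
    g.Parses n (.terminal t) w ↔ w = [t] := by
  cases n <;> rfl

theorem Parses.mono {m n : ℕ} {s : Symbol T g.NT} {w : List T} (h : g.Parses m s w)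
    (hmn : m ≤ n) : g.Parses n s w := by
  induction m generalizing n s w with
  | zero => cases s <;> simp_all [Parses]
  | succ m ih =>
    cases s with
    | terminal => simpa using h
    | nonterminal A =>
      obtain ⟨n, rfl⟩ := Nat.exists_eq_add_of_le' (Nat.one_le_of_lt hmn)
      obtain ⟨r, hr, hA, ws, hws, rfl⟩ := h
      exact ⟨r, hr, hA, ws, hws.imp fun _ _ h => ih h (by omega), rfl⟩

theorem Parses.input_mem [DecidableEq g.NT] {n : ℕ} {A : g.NT} {w : List T}
    (h : g.Parses n (.nonterminal A) w) : A ∈ g.rules.image ContextFreeRule.input := by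
  cases n with
  | zero => exact h.elim
  | succ n =>
    obtain ⟨r, hr, rfl, -⟩ := h
    exact Finset.mem_image_of_mem _ hr

theorem Derives.append {α β γ δ : List (Symbol T g.NT)} (h₁ : g.Derives α β)
    (h₂ : g.Derives γ δ) : g.Derives (α ++ γ) (β ++ δ) :=
  (h₁.append_right γ).trans (h₂.append_left β)

theorem derives_flatten {α : List (Symbol T g.NT)} {ws : List (List T)}
    (h : Forall₂ (fun s w => g.Derives [s] (w.map .terminal)) α ws) :
    g.Derives α (ws.flatten.map .terminal) := by
  induction h with
  | nil => exact .refl []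
  | cons hs _ ih => simpa using Derives.append hs ih

theorem Parses.derives {n : ℕ} {s : Symbol T g.NT} {w : List T} (h : g.Parses n s w) :
    g.Derives [s] (w.map .terminal) := by
  induction n generalizing s w with
  | zero => cases s <;> simp_all [Parses]; rfl
  | succ n ih =>
    cases s with
    | terminal => simp_all; rfl
    | nonterminal A =>
      obtain ⟨r, hr, rfl, ws, hws, rfl⟩ := h
      exact Produces.trans_derives ⟨r, hr, .input_output⟩
        (derives_flatten (hws.imp fun _ _ => ih))

theorem exists_parses_of_derives {α : List (Symbol T g.NT)} {w : List T}
    (h : g.Derives α (w.map .terminal)) :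
    ∃ n ws, Forall₂ (g.Parses n) α ws ∧ w = ws.flatten := by
  induction h using Relation.ReflTransGen.head_induction_on with
  | refl =>
    refine ⟨0, w.map ([·]), ?_, by rw [← flatMap_def, flatMap_singleton']⟩
    rw [forall₂_map_left_iff, forall₂_map_right_iff, forall₂_same]
    simp
  | head hp _ ih =>
    obtain ⟨n, ws, hws, rfl⟩ := ih
    obtain ⟨r, hr, hrw⟩ := hp
    obtain ⟨p, q, rfl, rfl⟩ := hrw.exists_parts
    obtain ⟨wpo, wq, rfl, hpo, hq⟩ := forall₂_append_left_iff.mp hws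
    obtain ⟨wp, wo, rfl, hp, ho⟩ := forall₂_append_left_iff.mp hpo
    have hA : g.Parses (n + 1) (.nonterminal r.input) wo.flatten := ⟨r, hr, rfl, wo, ho, rfl⟩
    refine ⟨n + 1, wp ++ [wo.flatten] ++ wq, ?_, by simp⟩
    exact rel_append (rel_append (hp.imp fun _ _ h => h.mono n.le_succ) (.cons hA .nil))
      (hq.imp fun _ _ h => h.mono n.le_succ)

def maxRuleLength (g : ContextFreeGrammar T) : ℕ :=
  g.rules.sup fun r => r.output.length

theorem length_output_le_maxRuleLength {r : ContextFreeRule T g.NT} (hr : r ∈ g.rules) :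
    r.output.length ≤ g.maxRuleLength :=
  Finset.le_sup (f := fun r => r.output.length) hr

def Reaches (g : ContextFreeGrammar T) (A : g.NT) (u : List T) (s : Symbol T g.NT)
    (z : List T) : Prop :=
  g.Derives [.nonterminal A] (u.map .terminal ++ [s] ++ z.map .terminal)

theorem Reaches.refl (A : g.NT) : g.Reaches A [] (.nonterminal A) [] :=
  Derives.refl _

theorem Reaches.trans {A B : g.NT} {u z u' z' : List T} {s : Symbol T g.NT}
    (h₁ : g.Reaches A u (.nonterminal B) z) (h₂ : g.Reaches B u' s z') :
    g.Reaches A (u ++ u') s (z' ++ z) := by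
  have := Derives.trans h₁ ((h₂.append_left (u.map .terminal)).append_right (z.map .terminal))
  simpa [Reaches] using this

theorem Reaches.derives {A : g.NT} {u x z : List T} {s : Symbol T g.NT} (h : g.Reaches A u s z)
    (hs : g.Derives [s] (x.map .terminal)) :
    g.Derives [.nonterminal A] ((u ++ x ++ z).map .terminal) := by
  have := Derives.trans h ((hs.append_left (u.map .terminal)).append_right (z.map .terminal))
  simpa using this

theorem Reaches.iterate {B : g.NT} {v y : List T} (h : g.Reaches B v (.nonterminal B) y)
    (i : ℕ) : g.Reaches B (replicate i v).flatten (.nonterminal B) (replicate i y).flatten := by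
  induction i with
  | zero => exact Reaches.refl B
  | succ i ih =>
    have := ih.trans h
    rwa [replicate_succ', flatten_append, flatten_singleton, replicate_succ, flatten_cons]

def Pumpable (g : ContextFreeGrammar T) (A : g.NT) (w : List T) : Prop :=
  ∃ B u v x y z, w = u ++ v ++ x ++ y ++ z ∧ v ++ y ≠ [] ∧ g.Reaches A u (.nonterminal B) z ∧
    g.Reaches B v (.nonterminal B) y ∧ g.Derives [.nonterminal B] (x.map .terminal)

theorem Parses.exists_shrink {n : ℕ} {A : g.NT} {w : List T} (h : g.Parses n (.nonterminal A) w)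
    (hw : 2 ≤ w.length) :
    ∃ u s x z, w = u ++ x ++ z ∧ u ++ z ≠ [] ∧ w.length ≤ g.maxRuleLength * x.length ∧
      g.Reaches A u s z ∧ g.Parses n s x := by
  induction n generalizing A w with
  | zero => exact h.elim
  | succ n ih =>
    obtain ⟨r, hr, rfl, ws, hws, rfl⟩ := h
    obtain ⟨p, s, q, wp, x, wq, hout, rfl, hp, hs, hq, hlen⟩ :=
      hws.exists_longest (by rintro rfl; simp at hw)
    have hreach : g.Reaches r.input wp.flatten s wq.flatten := by
      refine Produces.trans_derives ⟨r, hr, .input_output⟩ ?_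
      rw [hout]
      simpa using Derives.append (derives_flatten (hp.imp fun _ _ h => h.derives))
        (Derives.append (.refl [s]) (derives_flatten (hq.imp fun _ _ h => h.derives)))
    have hbound : (wp ++ x :: wq).flatten.length ≤ g.maxRuleLength * x.length :=
      hlen.trans (Nat.mul_le_mul_right _ (length_output_le_maxRuleLength hr))
    by_cases hmargin : wp.flatten ++ wq.flatten = []
    · obtain ⟨hwp, hwq⟩ := append_eq_nil_iff.mp hmargin
      have hx : (wp ++ x :: wq).flatten = x := by simp [hwp, hwq]
      rw [hx] at hw ⊢
      obtain ⟨B, rfl⟩ : ∃ B, s = .nonterminal B := by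
        cases s with
        | terminal t => simp only [parses_terminal] at hs; simp [hs] at hw
        | nonterminal B => exact ⟨B, rfl⟩
      obtain ⟨u, s', x', z, rfl, hmargin', hlen', hreach', hx'⟩ := ih hs hw
      rw [hwp, hwq] at hreach
      exact ⟨u, s', x', z, rfl, hmargin', hlen', by simpa using hreach.trans hreach',
        hx'.mono n.le_succ⟩
    · exact ⟨wp.flatten, s, x, wq.flatten, by simp, hmargin, hbound, hreach, hs.mono n.le_succ⟩

/-- Pigeonhole along the steps of `Parses.exists_shrink`: each step shrinks the yield by a factor
of at most `maxRuleLength + 1` and removes its starting nonterminal from `F`. -/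
theorem Parses.pumpable_or_escapes [DecidableEq g.NT] (F : Finset g.NT) {A : g.NT} (hA : A ∈ F)
    {n : ℕ} {w : List T} (h : g.Parses n (.nonterminal A) w)
    (hw : (g.maxRuleLength + 1) ^ F.card < w.length) :
    g.Pumpable A w ∨ ∃ B ∉ F, ∃ u x z m, w = u ++ x ++ z ∧ u ++ z ≠ [] ∧
      g.Reaches A u (.nonterminal B) z ∧ g.Parses m (.nonterminal B) x := by
  induction F using Finset.strongInduction generalizing A n w with
  | H F ih =>
  rw [← Finset.card_erase_add_one hA, pow_succ'] at hw
  have hpos : 1 ≤ (g.maxRuleLength + 1) ^ (F.erase A).card := Nat.one_le_pow _ _ (Nat.succ_pos _)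
  obtain ⟨u, s, x, z, rfl, hmargin, hlen, hreach, hx⟩ := h.exists_shrink (by nlinarith)
  have hx' : (g.maxRuleLength + 1) ^ (F.erase A).card < x.length :=
    lt_of_mul_lt_mul_left (hw.trans_le (hlen.trans (Nat.mul_le_mul_right _ (Nat.le_succ _))))
      (Nat.zero_le _)
  obtain ⟨B, rfl⟩ : ∃ B, s = .nonterminal B := by
    cases s with
    | terminal t => simp only [parses_terminal] at hx; simp [hx] at hx'
    | nonterminal B => exact ⟨B, rfl⟩
  by_cases hBA : B = A
  · subst hBA
    exact .inl ⟨B, [], u, x, z, [], by simp, hmargin, .refl B, hreach, hx.derives⟩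
  by_cases hBF : B ∈ F
  swap
  · exact .inr ⟨B, hBF, u, x, z, n, rfl, hmargin, hreach, hx⟩
  rcases ih _ (Finset.erase_ssubset hA) (Finset.mem_erase.mpr ⟨hBA, hBF⟩) hx hx' with
    ⟨C, u', v, x', y, z', rfl, hvy, h₁, h₂, h₃⟩ | ⟨C, hC, u', x', z', m, rfl, -, h₁, h₂⟩
  · exact .inl ⟨C, u ++ u', v, x', y, z' ++ z, by simp, hvy, hreach.trans h₁, h₂, h₃⟩
  by_cases hCA : C = A
  · subst hCA
    refine .inl ⟨C, [], u ++ u', x', z' ++ z, [], by simp, ?_, .refl C, hreach.trans h₁,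
      h₂.derives⟩
    simp_all
  · exact .inr ⟨C, fun hCF => hC (Finset.mem_erase.mpr ⟨hCA, hCF⟩), u ++ u', x', z' ++ z, m,
      by simp, by simp_all, hreach.trans h₁, h₂⟩

end ContextFreeGrammar

open ContextFreeGrammar List in
theorem Language.IsContextFree.exists_pumping {T : Type*} {L : Language T}
    (hL : L.IsContextFree) :
    ∃ K, ∀ w ∈ L, K < w.length → ∃ u v x y z, w = u ++ v ++ x ++ y ++ z ∧ v ++ y ≠ [] ∧
      ∀ i, u ++ (replicate i v).flatten ++ x ++ (replicate i y).flatten ++ z ∈ L := by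
  classical
  obtain ⟨g, rfl⟩ := hL
  refine ⟨(g.maxRuleLength + 1) ^ (g.rules.image ContextFreeRule.input).card,
    fun w hw hlen => ?_⟩
  obtain ⟨n, ws, hws, rfl⟩ := exists_parses_of_derives ((mem_language_iff g w).mp hw)
  rcases hws with _ | ⟨hx, ⟨⟩⟩
  rcases hx.pumpable_or_escapes _ hx.input_mem (by simpa using hlen) with
    ⟨B, u, v, x, y, z, hw, hvy, h₁, h₂, h₃⟩ | ⟨B, hBI, _, _, _, _, -, -, -, hB⟩
  · refine ⟨u, v, x, y, z, by simpa using hw, hvy, fun i => (mem_language_iff _ _).mpr ?_⟩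
    simpa using (h₁.trans (h₂.iterate i)).derives h₃
  · exact absurd hB.input_mem hBI

open List

def apcqar : Language (Fin 2) :=
  {w | ∃ p q r : ℕ, 1 ≤ p ∧ 1 ≤ q ∧ 1 ≤ r ∧ ((q < p ∧ r < p) ∨ (p = r ∧ q ≤ p)) ∧
    w = replicate p 0 ++ replicate q 1 ++ replicate r 0}

theorem idxOf_one_replicate_append {p q r : ℕ} (hq : 1 ≤ q) :
    (replicate p (0 : Fin 2) ++ replicate q 1 ++ replicate r 0).idxOf 1 = p := by
  obtain ⟨q, rfl⟩ := Nat.exists_eq_add_of_le' hq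
  rw [append_assoc, replicate_succ, cons_append, idxOf_append_cons_self,
    idxOf_eq_length (by simp), length_replicate]

theorem idxOf_one_reverse_replicate_append {p q r : ℕ} (hq : 1 ≤ q) :
    (replicate p (0 : Fin 2) ++ replicate q 1 ++ replicate r 0).reverse.idxOf 1 = r := by
  have hrev : (replicate p (0 : Fin 2) ++ replicate q 1 ++ replicate r 0).reverse =
      replicate r 0 ++ replicate q 1 ++ replicate p 0 := by
    simp
  rw [hrev]
  exact idxOf_one_replicate_append hq

/-- For `w = 0ᵖ1ᵠ0ʳ` with `q ≥ 1`, `p = w.idxOf 1`, `q = w.count 1` and `r = w.reverse.idxOf 1`. -/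
theorem apcqar_constraints {w : List (Fin 2)} (hw : w ∈ apcqar) :
    ((w.count 1 < w.idxOf 1 ∧ w.reverse.idxOf 1 < w.idxOf 1) ∨
      (w.idxOf 1 = w.reverse.idxOf 1 ∧ w.count 1 ≤ w.idxOf 1)) ∧
    w.idxOf 1 + w.count 1 + w.reverse.idxOf 1 = w.length := by
  obtain ⟨p, q, r, -, hq, -, hpqr, rfl⟩ := hw
  have hcount : (replicate p (0 : Fin 2) ++ replicate q 1 ++ replicate r 0).count 1 = q := by
    simp [count_replicate]
  rw [idxOf_one_replicate_append hq, idxOf_one_reverse_replicate_append hq, hcount]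
  refine ⟨hpqr, ?_⟩
  simp only [length_append, length_replicate]

theorem not_sublist_of_mem_apcqar {w : List (Fin 2)} (hw : w ∈ apcqar) : ¬ [1, 0, 1] <+ w := by
  obtain ⟨p, q, r, -, -, -, -, rfl⟩ := hw
  intro h
  have h₁ := cons_sublist_of_cons_sublist_replicate_append (by decide : (1 : Fin 2) ≠ 0) p
    (by simpa using h)
  rw [← reverse_sublist] at h₁
  have h₂ := cons_sublist_of_cons_sublist_replicate_append (by decide : (1 : Fin 2) ≠ 0) r
    (by simpa using h₁)
  simpa using h₂.subset (by simp : (0 : Fin 2) ∈ _)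

theorem sublist_append_self_of_mem {l : List (Fin 2)} (h₀ : 0 ∈ l) (h₁ : 1 ∈ l) :
    [1, 0, 1] <+ l ++ l := by
  obtain ⟨s, t, rfl⟩ := append_of_mem h₀
  have hl : [1] <+ s ++ 0 :: t := singleton_sublist.mpr h₁
  rcases mem_append.mp h₁ with hs | ht
  · exact (singleton_sublist.mpr hs).append (cons_sublist_cons.mpr (nil_sublist t)) |>.append hl
  · refine hl.append (Sublist.cons_cons (0 : Fin 2) (singleton_sublist.mpr ?_) |>.trans
      (sublist_append_right s _))
    simpa using ht

theorem apcqar_not_pumpable {N : ℕ} (hN : 1 ≤ N) {u v x y z : List (Fin 2)}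
    (hW : u ++ v ++ x ++ y ++ z = replicate N 0 ++ replicate N 1 ++ replicate N 0)
    (hvy : v ++ y ≠ []) (h₀ : u ++ x ++ z ∈ apcqar)
    (h₂ : u ++ v ++ v ++ x ++ y ++ y ++ z ∈ apcqar) : False := by
  have hlead : (u ++ v ++ x ++ y ++ z).idxOf 1 = N := by rw [hW, idxOf_one_replicate_append hN]
  have htrail : (u ++ v ++ x ++ y ++ z).reverse.idxOf 1 = N := by
    rw [hW, idxOf_one_reverse_replicate_append hN]
  have hcount : (u ++ v ++ x ++ y ++ z).count 1 = N := by rw [hW]; simp [count_replicate]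
  have hlen : (u ++ v ++ x ++ y ++ z).length = 3 * N := by rw [hW]; simp; omega
  obtain ⟨hc₀, hs₀⟩ := apcqar_constraints h₀
  obtain ⟨hc₂, hs₂⟩ := apcqar_constraints h₂
  simp only [count_append, length_append] at hcount hlen hs₀ hs₂ hc₀ hc₂
  by_cases hv : 1 ∈ v
  · have : (u ++ v ++ v ++ x ++ y ++ y ++ z).idxOf 1 = N := by
      rw [← hlead, show u ++ v ++ v ++ x ++ y ++ y ++ z = u ++ v ++ (v ++ x ++ y ++ y ++ z) by simp,
        show u ++ v ++ x ++ y ++ z = u ++ v ++ (x ++ y ++ z) by simp,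
        idxOf_append_of_mem (mem_append_right u hv), idxOf_append_of_mem (mem_append_right u hv)]
    have := count_pos_iff.mpr hv
    omega
  by_cases hy : 1 ∈ y
  · have hy₀ : 0 ∉ y := fun h => not_sublist_of_mem_apcqar h₂ <|
      (sublist_append_self_of_mem h hy).trans (IsInfix.sublist ⟨u ++ v ++ v ++ x, z, by simp⟩)
    have hy₁ : ∀ b ∈ y, b = 1 := fun b hb => by fin_cases b <;> simp_all
    have h₀' : z.reverse.idxOf 1 ≤ (u ++ x ++ z).reverse.idxOf 1 :=
      IsPrefix.idxOf_le ⟨(u ++ x).reverse, by simp⟩ 1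
    have h₂' : z.reverse.idxOf 1 ≤ (u ++ v ++ v ++ x ++ y ++ y ++ z).reverse.idxOf 1 :=
      IsPrefix.idxOf_le ⟨(u ++ v ++ v ++ x ++ y ++ y).reverse, by simp⟩ 1
    have := idxOf_reverse_append_append (s := u ++ v ++ x) (z := z) hy hy₁
    have := count_eq_length.mpr fun b hb => (hy₁ b hb).symm
    have := count_eq_zero.mpr hv
    have := length_pos_of_mem hy
    omega
  · have hlead' : (u ++ x ++ z).idxOf 1 ≤ (u ++ v ++ x ++ y ++ z).idxOf 1 :=
      calc (u ++ x ++ z).idxOf 1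
        _ ≤ (u ++ v ++ x ++ z).idxOf 1 := by
          simpa only [append_assoc] using idxOf_append_le_idxOf_append_append hv u (x ++ z)
        _ ≤ (u ++ v ++ x ++ y ++ z).idxOf 1 := idxOf_append_le_idxOf_append_append hy _ z
    have := count_eq_zero.mpr hv
    have := count_eq_zero.mpr hy
    have : 0 < v.length + y.length := by simpa [← length_append, length_pos_iff] using hvy
    omega

theorem not_isContextFree_apcqar : ¬ apcqar.IsContextFree := by
  intro h
  obtain ⟨K, hK⟩ := h.exists_pumping
  have hW : replicate (K + 1) 0 ++ replicate (K + 1) 1 ++ replicate (K + 1) 0 ∈ apcqar :=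
    ⟨K + 1, K + 1, K + 1, by omega, by omega, by omega, .inr ⟨rfl, le_rfl⟩, rfl⟩
  obtain ⟨u, v, x, y, z, hW', hvy, hpump⟩ := hK _ hW (by simp; omega)
  exact apcqar_not_pumpable K.succ_pos hW'.symm hvy (by simpa using hpump 0)
    (by simpa using hpump 2)

/-- The language `{ a^p c^q a^r : p,q,r ≥ 1, (p > q ∧ p > r) ∨ (p = r ∧ p ≥ q) }`
(with `a = 0`, `c = 1` over a two-letter alphabet) is not context-free. -/
theorem not_contextFree_ap_cq_ar :
    ¬ Language.IsContextFree {w : List (Fin 2) | ∃ p q r : ℕ,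
      1 ≤ p ∧ 1 ≤ q ∧ 1 ≤ r ∧ ((q < p ∧ r < p) ∨ (p = r ∧ q ≤ p)) ∧
      w = List.replicate p 0 ++ List.replicate q 1 ++ List.replicate r 0} :=
  not_isContextFree_apcqar
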